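/- Let C > 0, let A(z) = exp(i·log(|z|²)) and B(z) = exp(−i·log(|z|²)) for z ∈ ℂ, z ≠ 0 (real logarithm of |z|², so B(z) = conj(A(z))), and let ρ : (ℂ∖{0}) × ℂ → ℝ be ρ(z,w) = |w + A(z)|² + C·(log(|z|²))⁴ − 1. Define the vector field L(z,w) = ( z·(conj(w) + B(z)), −( i·conj(w)·A(z) − i·w·B(z) + 4C·(log(|z|²))³ ) ) ∈ ℂ². Then for every (z,w) with z ≠ 0: ∂ρ((z,w))(L(z,w)) = 0. (Thus L is a (1,0)-vector field annihilating ∂ρ, i.e. a section of the complex tangent bundle H^{1,0}(∂Ω) along the hypersurface {ρ = 0}.) -/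

import Mathlib

open Complex

noncomputable def delForm {E : Type*} [NormedAddCommGroup E] [NormedSpace ℂ E]
    (ρ : E → ℝ) (p ξ : E) : ℂ :=
  (1 / 2 : ℂ) * (((fderiv ℝ ρ p ξ : ℝ) : ℂ)
    - Complex.I * ((fderiv ℝ ρ p (Complex.I • ξ) : ℝ) : ℂ))

lemma normSq_hasFDerivAt' (c : ℂ) : HasFDerivAt (fun c : ℂ => Complex.normSq c)
    (c.re • Complex.reCLM + c.re • Complex.reCLM + (c.im • Complex.imCLM + c.im • Complex.imCLM)) c := by
  have e1 : (fun c : ℂ => Complex.normSq c) = ⇑Complex.reCLM * ⇑Complex.reCLM + ⇑Complex.imCLM * ⇑Complex.imCLM := by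
    funext x; simp [Complex.normSq_apply]
  rw [e1]
  exact ((Complex.reCLM.hasFDerivAt (x := c)).mul (Complex.reCLM.hasFDerivAt (x := c))).add
    ((Complex.imCLM.hasFDerivAt (x := c)).mul (Complex.imCLM.hasFDerivAt (x := c)))

lemma reC (x : ℂ) : ((x.re : ℝ) : ℂ) = (x + (starRingEnd ℂ) x) / 2 := by
  rw [Complex.add_conj]; push_cast; ring

lemma imC (x : ℂ) : ((x.im : ℝ) : ℂ) = Complex.I * ((starRingEnd ℂ) x - x) / 2 := by
  rw [show (starRingEnd ℂ) x - x = -(x - (starRingEnd ℂ) x) from by ring, Complex.sub_conj]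
  push_cast
  linear_combination (x.im : ℂ) * Complex.I_mul_I

set_option maxHeartbeats 2000000 in
/-- With `A(z) = e^{i log|z|²}`, `B(z) = e^{-i log|z|²}` and
`ρ(z,w) = |w + A(z)|² + C (log|z|²)⁴ - 1`, the vector field
`L(z,w) = (z(w̄ + B(z)), -(i w̄ A(z) - i w B(z) + 4C (log|z|²)³))` satisfies
`∂ρ((z,w))(L(z,w)) = 0` for every `z ≠ 0`, i.e. `L` is a `(1,0)`-field annihilating
`∂ρ`, a section of `H^{1,0}(∂Ω)` along `{ρ = 0}`. -/
theorem stmt_13 (C : ℝ) (hC : 0 < C)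
    (A B : ℂ → ℂ)
    (hA : ∀ z : ℂ, A z = Complex.exp (Complex.I * (Real.log ((‖z‖) ^ 2) : ℂ)))
    (hB : ∀ z : ℂ, B z = Complex.exp (-(Complex.I * (Real.log ((‖z‖) ^ 2) : ℂ))))
    (ρ : ℂ × ℂ → ℝ)
    (hρ : ∀ p : ℂ × ℂ,
      ρ p = (‖p.2 + A p.1‖) ^ 2 + C * (Real.log ((‖p.1‖) ^ 2)) ^ 4 - 1)
    (L : ℂ × ℂ → ℂ × ℂ)
    (hL : ∀ p : ℂ × ℂ,
      L p = (p.1 * ((starRingEnd ℂ) p.2 + B p.1),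
             -(Complex.I * (starRingEnd ℂ) p.2 * A p.1 - Complex.I * p.2 * B p.1
               + 4 * (C : ℂ) * ((Real.log ((‖p.1‖) ^ 2) : ℝ) : ℂ) ^ 3))) :
    ∀ p : ℂ × ℂ, p.1 ≠ 0 → delForm ρ p (L p) = 0 := by
  rintro ⟨z, w⟩ hz
  simp only at hz
  have hns : Complex.normSq z ≠ 0 := by simpa using hz
  have hA' : A z = Complex.exp (Complex.I * ((Real.log (Complex.normSq z) : ℝ) : ℂ)) := by
    rw [hA]; rw [Complex.sq_norm]
  have hB' : B z = Complex.exp (-(Complex.I * ((Real.log (Complex.normSq z) : ℝ) : ℂ))) := by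
    rw [hB]; rw [Complex.sq_norm]
  have hEq : ρ = fun q : ℂ × ℂ =>
      Complex.normSq (q.2 + Complex.exp (Complex.I * ((Real.log (Complex.normSq q.1) : ℝ) : ℂ)))
        + C * (Real.log (Complex.normSq q.1) * Real.log (Complex.normSq q.1)
            * Real.log (Complex.normSq q.1) * Real.log (Complex.normSq q.1)) - 1 := by
    funext q
    rw [hρ q, hA q.1]
    rw [← Complex.sq_norm, ← Complex.sq_norm q.1]
    ring
  have hfst : HasFDerivAt (fun q : ℂ × ℂ => q.1) (ContinuousLinearMap.fst ℝ ℂ ℂ) (z, w) :=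
    hasFDerivAt_fst
  have hsnd : HasFDerivAt (fun q : ℂ × ℂ => q.2) (ContinuousLinearMap.snd ℝ ℂ ℂ) (z, w) :=
    hasFDerivAt_snd
  have hN := (normSq_hasFDerivAt' z).comp (z, w) hfst
  have hT := (Real.hasDerivAt_log hns).comp_hasFDerivAt (z, w) hN
  have hIT := (Complex.ofRealCLM.hasFDerivAt.comp (z, w) hT).const_mul Complex.I
  have hE := (Complex.hasDerivAt_exp
    (Complex.I * ((Real.log (Complex.normSq z) : ℝ) : ℂ))).comp_hasFDerivAt (z, w) hIT
  have hG := hsnd.add hE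
  have hNG := (normSq_hasFDerivAt'
    (w + Complex.exp (Complex.I * ((Real.log (Complex.normSq z) : ℝ) : ℂ)))).comp (z, w) hG
  have hT4 := (((hT.mul hT).mul hT).mul hT).const_mul C
  have hFD := (hNG.add hT4).sub_const 1
  have hρ2 : HasFDerivAt ρ _ (z, w) := hEq ▸ hFD
  have hval := hρ2.fderiv
  simp only [delForm, hval, hL, hA', hB', Complex.sq_norm]
  simp only [ContinuousLinearMap.add_apply, ContinuousLinearMap.smul_apply,
    ContinuousLinearMap.comp_apply, ContinuousLinearMap.coe_fst', ContinuousLinearMap.coe_snd',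
    ContinuousLinearMap.coe_smul', Pi.smul_apply, Complex.reCLM_apply, Complex.imCLM_apply,
    Complex.ofRealCLM_apply, ContinuousLinearMap.sub_apply, smul_eq_mul, Function.comp_apply,
    Prod.smul_fst, Prod.smul_snd, Prod.fst, Prod.snd]
  rw [show Complex.exp (-(Complex.I * ((Real.log (Complex.normSq z) : ℝ) : ℂ)))
      = (starRingEnd ℂ) (Complex.exp (Complex.I * ((Real.log (Complex.normSq z) : ℝ) : ℂ))) from by
    rw [← Complex.exp_conj]; simp]
  have key : ∀ r s : ℝ, r = 0 → s = 0 →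
      (1 / 2 : ℂ) * ((r : ℂ) - Complex.I * (s : ℂ)) = 0 := by
    intro r s hr hs; rw [hr, hs]; simp
  have h : z.re * z.re + z.im * z.im ≠ 0 := by
    simpa [Complex.normSq_apply] using hns
  apply key
  · simp only [Complex.mul_re, Complex.mul_im, Complex.add_re, Complex.add_im, Complex.sub_re,
      Complex.sub_im, Complex.neg_re, Complex.neg_im, Complex.I_re, Complex.I_im,
      Complex.conj_re, Complex.conj_im, Complex.ofReal_re, Complex.ofReal_im,
      Complex.normSq_apply, ← Complex.ofReal_pow, Pi.mul_apply, Function.comp_apply,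
      Complex.re_ofNat, Complex.im_ofNat]
    have h2 : z.re ^ 2 + z.im ^ 2 ≠ 0 := by rw [sq, sq]; exact h
    field_simp
    ring
  · simp only [Complex.mul_re, Complex.mul_im, Complex.add_re, Complex.add_im, Complex.sub_re,
      Complex.sub_im, Complex.neg_re, Complex.neg_im, Complex.I_re, Complex.I_im,
      Complex.conj_re, Complex.conj_im, Complex.ofReal_re, Complex.ofReal_im,
      Complex.normSq_apply, ← Complex.ofReal_pow, Pi.mul_apply, Function.comp_apply,
      Complex.re_ofNat, Complex.im_ofNat]
    have h2 : z.re ^ 2 + z.im ^ 2 ≠ 0 := by rw [sq, sq]; exact h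
    field_simp
    ring
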